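/- arXiv:1410.8270 — 3 statements merged into one kernel-verified Lean document; each statement's English description precedes it below -/
import Mathlib

section
/- For positive integers n and m with m ≥ 1, ∑_{s=0}^{n} ∑_{k=s}^{⌊(n+s)/2⌋} (n+s-2k+1)^2 * binom(s+m-1, m-1) = binom(n+m+3, m+3). -/
open Finset

lemma sq_choose (d : ℕ) : (d + 4).choose 2 + (d + 3).choose 2 = (d + 3) ^ 2 := by
  induction d with
  | zero => decide
  | succ d ih =>
    have e1 : (d + 1 + 4).choose 2 = (d + 4).choose 1 + (d + 4).choose 2 := by
      rw [show d + 1 + 4 = (d + 4) + 1 from by omega]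
      exact Nat.choose_succ_succ (d + 4) 1
    have e2 : (d + 1 + 3).choose 2 = (d + 3).choose 1 + (d + 3).choose 2 := by
      rw [show d + 1 + 3 = (d + 3) + 1 from by omega]
      exact Nat.choose_succ_succ (d + 3) 1
    have e3 : (d + 1 + 3) ^ 2 = (d + 3) ^ 2 + 2 * d + 7 := by ring
    simp only [Nat.choose_one_right] at e1 e2
    omega

/-- Sum of squares along a parity class equals a tetrahedral number. -/
lemma inner_sum_squares (d : ℕ) :
    ∑ k ∈ Finset.range (d / 2 + 1), (d - 2 * k + 1) ^ 2 = (d + 3).choose 3 := by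
  induction d using Nat.twoStepInduction with
  | zero => decide
  | one => decide
  | more d ih _ =>
    have hdiv : (d + 2) / 2 = d / 2 + 1 := by omega
    rw [hdiv, Finset.sum_range_succ']
    have h0 : (d + 2 - 2 * 0 + 1) ^ 2 = (d + 3) ^ 2 := by norm_num
    have hshift : ∀ k ∈ Finset.range (d / 2 + 1),
        (d + 2 - 2 * (k + 1) + 1) ^ 2 = (d - 2 * k + 1) ^ 2 := by
      intro k hk
      congr 1
      omega
    rw [Finset.sum_congr rfl hshift, ih, h0]
    have e1 : (d + 2 + 3).choose 3 = (d + 4).choose 2 + (d + 4).choose 3 := by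
      rw [show d + 2 + 3 = (d + 4) + 1 from by omega]
      exact Nat.choose_succ_succ (d + 4) 2
    have e2 : (d + 4).choose 3 = (d + 3).choose 2 + (d + 3).choose 3 := by
      rw [show d + 4 = (d + 3) + 1 from by omega]
      exact Nat.choose_succ_succ (d + 3) 2
    have e3 := sq_choose d
    omega

/-- Vandermonde-type convolution of ascending binomials. -/
lemma vand (b : ℕ) : ∀ a n : ℕ,
    ∑ s ∈ Finset.range (n + 1), (s + a).choose a * (n - s + b).choose b =
      (n + a + b + 1).choose (a + b + 1) := by
  induction b with
  | zero =>
    intro a n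
    simp only [Nat.choose_zero_right, mul_one]
    rw [Nat.sum_range_add_choose, Nat.add_zero]
  | succ b ih =>
    intro a n
    have step : ∀ s ∈ Finset.range (n + 1),
        (s + a).choose a * (n - s + (b + 1)).choose (b + 1) =
          ∑ t ∈ Finset.range (n + 1 - s), (s + a).choose a * (t + b).choose b := by
      intro s hs
      rw [← Finset.mul_sum]
      congr 1
      have hs' : s ≤ n := by simpa [Nat.lt_succ_iff] using hs
      have : n + 1 - s = (n - s) + 1 := by omega
      rw [this, Nat.sum_range_add_choose]
      congr 1
    rw [Finset.sum_congr rfl step, ← Finset.sum_range_diag_flip (n + 1)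
      (fun s t => (s + a).choose a * (t + b).choose b)]
    have inner : ∀ u ∈ Finset.range (n + 1),
        ∑ k ∈ Finset.range (u + 1), (k + a).choose a * (u - k + b).choose b =
          (u + (a + b + 1)).choose (a + b + 1) := by
      intro u _
      rw [ih a u]
      congr 1
      omega
    rw [Finset.sum_congr rfl inner, Nat.sum_range_add_choose]
    congr 1 <;> omega

/-- For `n ≥ 1` and `m ≥ 1`,
`∑_{s=0}^{n} ∑_{k=s}^{⌊(n+s)/2⌋} (n+s-2k+1)² binom(s+m-1, m-1) = binom(n+m+3, m+3)`. -/
theorem double_sum_squares_choose (n m : ℕ) (hn : 1 ≤ n) (hm : 1 ≤ m) :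
    ∑ s ∈ Finset.range (n + 1), ∑ k ∈ Finset.Icc s ((n + s) / 2),
      (n + s - 2 * k + 1) ^ 2 * (s + m - 1).choose (m - 1) =
    (n + m + 3).choose (m + 3) := by
  have hrow : ∀ s ∈ Finset.range (n + 1),
      ∑ k ∈ Finset.Icc s ((n + s) / 2),
          (n + s - 2 * k + 1) ^ 2 * (s + m - 1).choose (m - 1) =
        (s + (m - 1)).choose (m - 1) * ((n - s) + 3).choose 3 := by
    intro s hs
    have hs' : s ≤ n := by simpa [Nat.lt_succ_iff] using hs
    rw [← Finset.sum_mul]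
    have hIcc : Finset.Icc s ((n + s) / 2) = Finset.Ico s ((n + s) / 2 + 1) := by
      rw [Finset.Ico_add_one_right_eq_Icc]
    rw [hIcc, Finset.sum_Ico_eq_sum_range]
    have hlen : (n + s) / 2 + 1 - s = (n - s) / 2 + 1 := by omega
    rw [hlen]
    have hterm : ∀ k ∈ Finset.range ((n - s) / 2 + 1),
        (n + s - 2 * (s + k) + 1) ^ 2 = ((n - s) - 2 * k + 1) ^ 2 := by
      intro k _
      congr 1
      omega
    rw [Finset.sum_congr rfl hterm, inner_sum_squares (n - s)]
    rw [mul_comm]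
    congr 2
    omega
  rw [Finset.sum_congr rfl hrow, vand 3 (m - 1) n]
  congr 1 <;> omega
end

section
/- For nonnegative integers n and m, the number of quadruples (i,j,t,l) where i,j,t are nonnegative integers with t ≤ i, t ≤ j, i+j-t ≤ n, and l is a weak composition of t into m+1 parts, equals binom(n+m+3, m+3). -/
lemma card_tuple_sum (k n : ℕ) :
    Nat.card {f : Fin k → ℕ // ∑ i, f i = n} = (n + k - 1).choose n := by
  have e : {f : Fin k → ℕ // ∑ i, f i = n} ≃ Sym (Fin k) n := by
    refine Equiv.subtypeEquiv
      (Finsupp.equivFunOnFinite.symm.trans Multiset.toFinsupp.toEquiv.symm) fun f => ?_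
    rw [Equiv.trans_apply]
    rw [show (Multiset.toFinsupp.toEquiv.symm (Finsupp.equivFunOnFinite.symm f)) =
      Finsupp.toMultiset (Finsupp.equivFunOnFinite.symm f) from rfl]
    rw [Finsupp.card_toMultiset, Finsupp.sum_fintype]
    · rfl
    · intro; rfl
  rw [Nat.card_congr e, Nat.card_eq_fintype_card, Sym.card_sym_eq_multichoose,
    Fintype.card_fin, Nat.multichoose_eq]
  congr 1
  omega


lemma sum4 (m : ℕ) (f : Fin (m + 4) → ℕ) :
    ∑ i, f i = f 0 + f 1 + f 2 + ∑ i : Fin (m + 1), f (Fin.succ (Fin.succ (Fin.succ i))) := by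
  rw [Fin.sum_univ_succ, Fin.sum_univ_succ, Fin.sum_univ_succ]
  simp [Fin.succ_zero_eq_one, Fin.succ_one_eq_two]
  ring

/-- The number of quadruples `(i,j,t,l)` with `t ≤ i`, `t ≤ j`, `i+j-t ≤ n` and `l` a weak
composition of `t` into `m+1` parts equals `binom(n+m+3, m+3)`. -/
theorem card_index_set (n m : ℕ) :
    Nat.card {x : ℕ × ℕ × ℕ × (Fin (m + 1) → ℕ) //
        x.2.2.1 ≤ x.1 ∧ x.2.2.1 ≤ x.2.1 ∧ x.1 + x.2.1 - x.2.2.1 ≤ n ∧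
          ∑ i, x.2.2.2 i = x.2.2.1} =
      (n + m + 3).choose (m + 3) := by
  have e : {x : ℕ × ℕ × ℕ × (Fin (m + 1) → ℕ) //
        x.2.2.1 ≤ x.1 ∧ x.2.2.1 ≤ x.2.1 ∧ x.1 + x.2.1 - x.2.2.1 ≤ n ∧
          ∑ i, x.2.2.2 i = x.2.2.1} ≃ {f : Fin (m + 4) → ℕ // ∑ i, f i = n} := by
    refine ⟨fun x => ⟨Fin.cons (x.1.1 - x.1.2.2.1) (Fin.cons (x.1.2.1 - x.1.2.2.1)
        (Fin.cons (n - (x.1.1 + x.1.2.1 - x.1.2.2.1)) x.1.2.2.2)), ?_⟩,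
      fun f => ⟨(f.1 0 + ∑ i, f.1 (Fin.succ (Fin.succ (Fin.succ i))),
        f.1 1 + ∑ i, f.1 (Fin.succ (Fin.succ (Fin.succ i))),
        ∑ i, f.1 (Fin.succ (Fin.succ (Fin.succ i))),
        fun i => f.1 (Fin.succ (Fin.succ (Fin.succ i)))), ?_, ?_, ?_, rfl⟩, ?_, ?_⟩
    · obtain ⟨⟨i, j, t, l⟩, h1, h2, h3, h4⟩ := x
      simp only at h1 h2 h3 h4
      rw [sum4]
      simp only [Fin.cons_zero, ← Fin.succ_zero_eq_one, ← Fin.succ_one_eq_two, Fin.cons_succ]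
      rw [h4]
      omega
    · simp
    · simp
    · obtain ⟨f, hf⟩ := f
      simp only
      rw [sum4] at hf
      omega
    · rintro ⟨⟨i, j, t, l⟩, h1, h2, h3, h4⟩
      simp only at h1 h2 h3 h4
      simp only [Fin.cons_succ, Fin.cons_zero, ← Fin.succ_zero_eq_one, ← Fin.succ_one_eq_two,
        Subtype.mk.injEq, Prod.mk.injEq]
      rw [h4]
      exact ⟨by omega, by omega, by omega, trivial⟩
    · rintro ⟨f, hf⟩
      rw [sum4] at hf
      simp only [← Fin.succ_zero_eq_one, ← Fin.succ_one_eq_two] at hf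
      apply Subtype.ext
      funext x
      simp only
      refine Fin.cases ?_ (fun x => ?_) x
      · simp only [Fin.cons_zero, ← Fin.succ_zero_eq_one, ← Fin.succ_one_eq_two]; omega
      refine Fin.cases ?_ (fun x => ?_) x
      · simp only [Fin.cons_succ, Fin.cons_zero, ← Fin.succ_zero_eq_one, ← Fin.succ_one_eq_two]
        omega
      refine Fin.cases ?_ (fun x => ?_) x
      · simp only [Fin.cons_succ, Fin.cons_zero, ← Fin.succ_zero_eq_one, ← Fin.succ_one_eq_two]
        omega
      · simp only [Fin.cons_succ]
  rw [Nat.card_congr e, card_tuple_sum]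
  have h := Nat.choose_symm (show m + 3 ≤ n + m + 3 by omega)
  rw [show n + m + 3 - (m + 3) = n from by omega] at h
  rw [show n + (m + 4) - 1 = n + m + 3 from by omega, h]
end

section
/- If a *-subalgebra A of Mat(n×n, ℂ) (closed under conjugate transpose) has a basis consisting of real symmetric matrices, then A is commutative. -/
open Matrix

theorem Matrix.isSymm_of_basis_isSymm {ι R M n α : Type*} [Semiring R] [AddCommMonoid M]
    [Module R M] [AddCommMonoid α] [Module R α] (b : Module.Basis ι R M)
    (f : M →ₗ[R] Matrix n n α) (hb : ∀ i, (f (b i)).IsSymm) (x : M) : (f x).IsSymm := by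
  have hf : (transposeLinearEquiv n n R α).toLinearMap ∘ₗ f = f := b.ext hb
  exact LinearMap.congr_fun hf x

theorem Matrix.IsSymm.mul_comm_of_isSymm_mul {n α : Type*} [Fintype n] [CommSemiring α]
    {A B : Matrix n n α} (hA : A.IsSymm) (hB : B.IsSymm) (hAB : (A * B).IsSymm) :
    A * B = B * A := by
  rw [← hAB.eq, transpose_mul, hA.eq, hB.eq]

/-- A `*`-subalgebra of `Mat(n×n, ℂ)` with a basis of real symmetric matrices is
commutative. -/
theorem star_subalgebra_comm_of_symmetric_basis (n : ℕ)
    (A : StarSubalgebra ℂ (Matrix (Fin n) (Fin n) ℂ)) (ι : Type) (b : Module.Basis ι ℂ A)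
    (hb : ∀ i, Matrix.transpose (b i : Matrix (Fin n) (Fin n) ℂ) =
        (b i : Matrix (Fin n) (Fin n) ℂ) ∧
      ∀ k l, ((b i : Matrix (Fin n) (Fin n) ℂ) k l).im = 0) :
    ∀ x y : A, x * y = y * x := by
  have hsymm (x : A) : (x : Matrix (Fin n) (Fin n) ℂ).IsSymm :=
    isSymm_of_basis_isSymm b A.subtype.toLinearMap (fun i => (hb i).1) x
  intro x y
  exact Subtype.ext <| (hsymm x).mul_comm_of_isSymm_mul (hsymm y) (hsymm (x * y))
end
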